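/- arXiv:math/0609283 — 6 statements merged into one kernel-verified Lean document; each statement's English description precedes it below -/
import Mathlib

section
/- The sequence (1/F_{n+2})_{n≥0} is the moment sequence of the probability measure μ = (1-q^2) Σ_{k=0}^∞ q^{2k} δ_{q^k/φ}, i.e., for all n ≥ 0, 1/F_{n+2} = (1-q^2) Σ_{k=0}^∞ q^{2k} (q^k/φ)^n; moreover μ is a positive measure with total mass 1. -/
open MeasureTheory

noncomputable def goldenPhi : ℝ := (1 + Real.sqrt 5) / 2

noncomputable def fibQ : ℝ := (1 - Real.sqrt 5) / (1 + Real.sqrt 5)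

/-- The measure `μ = (1 - q²) ∑_{k≥0} q^{2k} δ_{q^k/φ}`. -/
noncomputable def fibMeasure : Measure ℝ :=
  Measure.sum fun k : ℕ =>
    ENNReal.ofReal ((1 - fibQ ^ 2) * fibQ ^ (2 * k)) • Measure.dirac (fibQ ^ k / goldenPhi)

/-!
With `q = ψ/φ`, Binet's formula reads `1 - q^m = √5 F_m / φ^m`. The `n`-th moment of `μ` is a
geometric series in `q^(n+2)`, equal to `(1 - q²) φ⁻ⁿ / (1 - q^(n+2))`, and Binet turns this
into `1 / F_(n+2)`. The case `n = 0` says that `μ` has mass one; all atoms lie in `[-1, 1]`, so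
every monomial is integrable and its integral is the corresponding series.
-/

open Real goldenRatio ENNReal

section WeightedDiracSum

variable {ι α E : Type*} [MeasurableSpace α] [NormedAddCommGroup E]

noncomputable def weightedDiracSum (w : ι → ℝ) (x : ι → α) : Measure α :=
  Measure.sum fun k => ENNReal.ofReal (w k) • Measure.dirac (x k)

variable {w : ι → ℝ} {x : ι → α}

theorem weightedDiracSum_univ (hw : ∀ k, 0 ≤ w k) (hs : Summable w) :
    weightedDiracSum w x Set.univ = ENNReal.ofReal (∑' k, w k) := by
  simp [weightedDiracSum, Measure.sum_apply _ MeasurableSet.univ,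
    ENNReal.ofReal_tsum_of_nonneg hw hs]

variable [MeasurableSingletonClass α]

theorem integrable_weightedDiracSum (hw : ∀ k, 0 ≤ w k) (hs : Summable w) {f : α → E}
    (hf : AEStronglyMeasurable f (weightedDiracSum w x)) {C : ℝ} (hC : ∀ k, ‖f (x k)‖ ≤ C) :
    Integrable f (weightedDiracSum w x) := by
  refine ⟨hf, ?_⟩
  rw [HasFiniteIntegral, weightedDiracSum, lintegral_sum_measure]
  simp only [lintegral_smul_measure, lintegral_dirac, smul_eq_mul]
  calc ∑' k, ENNReal.ofReal (w k) * ‖f (x k)‖ₑ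
      ≤ ∑' k, ENNReal.ofReal (w k) * ENNReal.ofReal C :=
        ENNReal.tsum_le_tsum fun k => by
          gcongr; rw [← ofReal_norm]; exact ENNReal.ofReal_le_ofReal (hC k)
    _ = ENNReal.ofReal (∑' k, w k) * ENNReal.ofReal C := by
        rw [ENNReal.tsum_mul_right, ENNReal.ofReal_tsum_of_nonneg hw hs]
    _ < ⊤ := ENNReal.mul_lt_top ofReal_lt_top ofReal_lt_top

theorem integral_weightedDiracSum [NormedSpace ℝ E] [CompleteSpace E] (hw : ∀ k, 0 ≤ w k)
    {f : α → E} (hf : Integrable f (weightedDiracSum w x)) :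
    ∫ a, f a ∂weightedDiracSum w x = ∑' k, w k • f (x k) := by
  rw [weightedDiracSum, integral_sum_measure hf]
  simp only [integral_smul_measure, integral_dirac, ENNReal.toReal_ofReal (hw _)]

end WeightedDiracSum

theorem goldenPhi_eq_goldenRatio : goldenPhi = φ := rfl

theorem fibQ_eq : fibQ = ψ / φ := by
  have h : (1 : ℝ) + √5 ≠ 0 := by positivity
  unfold fibQ goldenRatio goldenConj
  field_simp

theorem abs_fibQ_lt_one : |fibQ| < 1 := by
  rw [fibQ_eq, abs_div, abs_of_pos goldenRatio_pos, div_lt_one goldenRatio_pos]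
  exact (abs_lt.mpr ⟨neg_one_lt_goldenConj, goldenConj_neg.trans one_pos⟩).trans
    one_lt_goldenRatio

theorem one_sub_fibQ_pow (m : ℕ) : 1 - fibQ ^ m = √5 * Nat.fib m / φ ^ m := by
  have : √5 ≠ 0 := by positivity
  rw [fibQ_eq, div_pow, Real.coe_fib_eq]
  field_simp [goldenRatio_ne_zero]

theorem hasSum_fibQ_moment (n : ℕ) :
    HasSum (fun k : ℕ => fibQ ^ (2 * k) * (fibQ ^ k / goldenPhi) ^ n)
      ((1 - fibQ ^ (n + 2))⁻¹ * (φ ^ n)⁻¹) := by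
  have hr : ‖fibQ ^ (n + 2)‖ < 1 := by
    rw [norm_pow, Real.norm_eq_abs]
    exact pow_lt_one₀ (abs_nonneg _) abs_fibQ_lt_one (by omega)
  have hterm (k : ℕ) : fibQ ^ (2 * k) * (fibQ ^ k / goldenPhi) ^ n
      = (fibQ ^ (n + 2)) ^ k * (φ ^ n)⁻¹ := by
    rw [goldenPhi_eq_goldenRatio, div_pow, div_eq_mul_inv, ← mul_assoc, ← pow_mul, ← pow_mul,
      ← pow_add]
    ring_nf
  simpa only [hterm] using (hasSum_geometric_of_norm_lt_one hr).mul_right (φ ^ n)⁻¹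

theorem one_div_fib_eq_fibQ_moment (n : ℕ) :
    1 / (Nat.fib (n + 2) : ℝ) =
      (1 - fibQ ^ 2) * ∑' k : ℕ, fibQ ^ (2 * k) * (fibQ ^ k / goldenPhi) ^ n := by
  have hF : (Nat.fib (n + 2) : ℝ) ≠ 0 := by positivity [Nat.fib_pos.mpr (by omega : 0 < n + 2)]
  have : √5 ≠ 0 := by positivity
  rw [(hasSum_fibQ_moment n).tsum_eq, one_sub_fibQ_pow, one_sub_fibQ_pow, Nat.fib_two]
  field_simp [goldenRatio_ne_zero]
  ring

theorem fibQ_sq_lt_one : fibQ ^ 2 < 1 := by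
  simpa [sq_abs] using pow_lt_one₀ (abs_nonneg _) abs_fibQ_lt_one two_ne_zero

theorem fibQ_weight_nonneg (k : ℕ) : 0 ≤ (1 - fibQ ^ 2) * fibQ ^ (2 * k) := by
  rw [pow_mul]
  exact mul_nonneg (sub_nonneg.mpr fibQ_sq_lt_one.le) (pow_nonneg (sq_nonneg _) k)

theorem hasSum_fibQ_weight : HasSum (fun k : ℕ => (1 - fibQ ^ 2) * fibQ ^ (2 * k)) 1 := by
  have h : 1 - fibQ ^ 2 ≠ 0 := (sub_pos.mpr fibQ_sq_lt_one).ne'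
  have := (hasSum_fibQ_moment 0).mul_left (1 - fibQ ^ 2)
  simp only [pow_zero, mul_one, inv_one, zero_add] at this
  rwa [mul_inv_cancel₀ h] at this

theorem norm_fibQ_atom_pow_le_one (n k : ℕ) : ‖(fibQ ^ k / goldenPhi) ^ n‖ ≤ 1 := by
  rw [goldenPhi_eq_goldenRatio, norm_pow, norm_div, norm_pow, Real.norm_eq_abs,
    Real.norm_of_nonneg goldenRatio_pos.le]
  exact pow_le_one₀ (by positivity) <| div_le_one_of_le₀
    ((pow_le_one₀ (abs_nonneg _) abs_fibQ_lt_one.le).trans one_lt_goldenRatio.le)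
    goldenRatio_pos.le

theorem fib_reciprocal_moments :
    (∀ n : ℕ, (1 : ℝ) / (Nat.fib (n + 2) : ℝ) =
        (1 - fibQ ^ 2) * ∑' k : ℕ, fibQ ^ (2 * k) * (fibQ ^ k / goldenPhi) ^ n) ∧
      IsProbabilityMeasure fibMeasure ∧
      (∀ n : ℕ, ∫ x, x ^ n ∂fibMeasure = (1 : ℝ) / (Nat.fib (n + 2) : ℝ)) := by
  have hμ : fibMeasure = weightedDiracSum (fun k => (1 - fibQ ^ 2) * fibQ ^ (2 * k))
      (fun k => fibQ ^ k / goldenPhi) := rfl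
  have hs := hasSum_fibQ_weight
  refine ⟨one_div_fib_eq_fibQ_moment, ⟨?_⟩, fun n => ?_⟩
  · rw [hμ, weightedDiracSum_univ fibQ_weight_nonneg hs.summable, hs.tsum_eq, ofReal_one]
  · have hint := integrable_weightedDiracSum fibQ_weight_nonneg hs.summable
      (continuous_pow n).aestronglyMeasurable (norm_fibQ_atom_pow_le_one n)
    rw [hμ, integral_weightedDiracSum fibQ_weight_nonneg hint, one_div_fib_eq_fibQ_moment,
      ← tsum_mul_left]
    simp only [smul_eq_mul, mul_assoc]
end

section
/- For all 0 ≤ k ≤ n, the Fibonomial coefficient binom(n,k)_F = ∏_{i=1}^k F_{n-i+1}/F_i is a positive integer. -/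
/-- The Fibonomial coefficient `∏_{i=1}^k F_{n-i+1}/F_i`, as a real number. -/
noncomputable def fibinom (n k : ℕ) : ℝ :=
  ∏ j ∈ Finset.range k, (Nat.fib (n - j) : ℝ) / (Nat.fib (j + 1) : ℝ)

/-- Natural-number fibonomial via the standard recurrence. -/
def nfib : ℕ → ℕ → ℕ
  | _, 0 => 1
  | 0, _+1 => 0
  | n+1, k+1 => Nat.fib (n+1-k) * nfib n k + Nat.fib k * nfib n (k+1)

lemma fibinom_eq_div (n k : ℕ) :
    fibinom n k = (∏ j ∈ Finset.range k, (Nat.fib (n - j) : ℝ)) /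
      (∏ j ∈ Finset.range k, (Nat.fib (j + 1) : ℝ)) := by
  rw [fibinom, Finset.prod_div_distrib]

lemma den_pos (k : ℕ) : 0 < ∏ j ∈ Finset.range k, (Nat.fib (j + 1) : ℝ) := by
  apply Finset.prod_pos
  intro i _
  exact_mod_cast Nat.fib_pos.2 i.succ_pos

lemma fibinom_zero (n : ℕ) : fibinom n 0 = 1 := by
  simp [fibinom]

lemma fibinom_eq_zero {n k : ℕ} (h : n < k) : fibinom n k = 0 := by
  apply Finset.prod_eq_zero (Finset.mem_range.2 h)
  simp

lemma fibinom_succ_succ (n k : ℕ) :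
    fibinom (n+1) (k+1) = (Nat.fib (n+1) : ℝ) / (Nat.fib (k+1)) * fibinom n k := by
  rw [fibinom_eq_div, fibinom_eq_div, Finset.prod_range_succ', Finset.prod_range_succ]
  have : ∀ j, n + 1 - (j + 1) = n - j := fun j => by omega
  simp only [this, Nat.sub_zero]
  field_simp

lemma fibinom_right_succ (n k : ℕ) :
    fibinom n (k+1) = (Nat.fib (n-k) : ℝ) / (Nat.fib (k+1)) * fibinom n k := by
  rw [fibinom, Finset.prod_range_succ, ← fibinom]
  ring

lemma fibinom_rec (n k : ℕ) (hk : k ≤ n) :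
    fibinom (n+1) (k+1) =
      (Nat.fib (n+1-k) : ℝ) * fibinom n k + (Nat.fib k : ℝ) * fibinom n (k+1) := by
  have hfib : Nat.fib (n+1) = Nat.fib k * Nat.fib (n-k) + Nat.fib (k+1) * Nat.fib (n-k+1) := by
    have := Nat.fib_add k (n - k)
    have h1 : k + (n - k) + 1 = n + 1 := by omega
    rw [h1] at this
    exact this
  have h2 : n + 1 - k = n - k + 1 := by omega
  rw [fibinom_succ_succ, fibinom_right_succ, h2]
  have hk1 : (Nat.fib (k+1) : ℝ) ≠ 0 := by
    exact_mod_cast (Nat.fib_pos.2 k.succ_pos).ne'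
  field_simp
  rw [hfib]
  push_cast
  ring

lemma fibinom_eq_nfib : ∀ n k, fibinom n k = (nfib n k : ℝ) := by
  intro n
  induction n with
  | zero =>
    intro k
    match k with
    | 0 => simp [fibinom_zero, nfib]
    | k+1 =>
      rw [fibinom_eq_zero k.succ_pos]
      simp [nfib]
  | succ n ih =>
    intro k
    match k with
    | 0 => simp [fibinom_zero, nfib]
    | k+1 =>
      rw [show nfib (n+1) (k+1) = Nat.fib (n+1-k) * nfib n k + Nat.fib k * nfib n (k+1) from rfl]
      push_cast
      rw [← ih k, ← ih (k+1)]
      rcases le_or_gt k n with h | h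
      · exact fibinom_rec n k h
      · have h1 : n + 1 - k = 0 := by omega
        rw [h1, fibinom_eq_zero (by omega : n < k + 1),
          fibinom_eq_zero (by omega : n + 1 < k + 1)]
        simp

theorem fibinom_pos_int (n k : ℕ) (hk : k ≤ n) :
    ∃ m : ℕ, 0 < m ∧ fibinom n k = (m : ℝ) := by
  refine ⟨nfib n k, ?_, fibinom_eq_nfib n k⟩
  have hpos : 0 < fibinom n k := by
    apply Finset.prod_pos
    intro i hi
    rw [Finset.mem_range] at hi
    apply div_pos
    · exact_mod_cast Nat.fib_pos.2 (by omega)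
    · exact_mod_cast Nat.fib_pos.2 i.succ_pos
  rw [fibinom_eq_nfib] at hpos
  exact_mod_cast hpos
end

section
/- For integers n ≥ i, j ≥ 0 and α ≥ 0, the Fibonacci numbers satisfy F_{α+2n}·F_{α+i+j} = F_{α+n+i}·F_{α+n+j} - (-1)^{α+i+j}·F_{n-i}·F_{n-j}. -/
private lemma docagne (m a : ℕ) :
    (Nat.fib (m + a) : ℤ) * Nat.fib (m + 1) - Nat.fib m * Nat.fib (m + a + 1) =
      (-1 : ℤ) ^ m * Nat.fib a := by
  induction m with
  | zero => simp
  | succ m ih =>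
      have h1 : Nat.fib (m + 1 + 1) = Nat.fib m + Nat.fib (m + 1) := by
        rw [Nat.fib_add_two]
      have h2 : Nat.fib (m + 1 + a + 1) = Nat.fib (m + a) + Nat.fib (m + a + 1) := by
        have := Nat.fib_add_two (n := m + a)
        have e : m + 1 + a + 1 = m + a + 2 := by omega
        rw [e, this]
      have e3 : m + 1 + a = m + a + 1 := by omega
      rw [e3] at h2 ⊢
      rw [h1, h2]
      push_cast
      ring_nf
      ring_nf at ih
      linarith [ih]

private lemma vajda (m a b : ℕ) :
    (Nat.fib (m + a) : ℤ) * Nat.fib (m + b) - Nat.fib m * Nat.fib (m + a + b) =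
      (-1 : ℤ) ^ m * Nat.fib a * Nat.fib b := by
  induction b using Nat.twoStepInduction with
  | zero => simp [mul_comm]
  | one =>
      have := docagne m a
      simpa [mul_comm, mul_assoc] using this
  | more b ih1 ih2 =>
      have h1 : Nat.fib (m + (b + 2)) = Nat.fib (m + b) + Nat.fib (m + (b + 1)) := by
        have := Nat.fib_add_two (n := m + b)
        have e : m + (b + 2) = m + b + 2 := by omega
        have e2 : m + (b + 1) = m + b + 1 := by omega
        rw [e, e2, this]
      have h2 : Nat.fib (m + a + (b + 2)) = Nat.fib (m + a + b) + Nat.fib (m + a + (b + 1)) := by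
        have := Nat.fib_add_two (n := m + a + b)
        have e : m + a + (b + 2) = m + a + b + 2 := by omega
        have e2 : m + a + (b + 1) = m + a + b + 1 := by omega
        rw [e, e2, this]
      have h3 : Nat.fib (b + 2) = Nat.fib b + Nat.fib (b + 1) := by
        rw [Nat.fib_add_two]
      rw [h1, h2, h3]
      push_cast
      ring_nf
      ring_nf at ih1 ih2
      linarith [ih1, ih2]

theorem fib_identity (n i j α : ℕ) (hi : i ≤ n) (hj : j ≤ n) :
    (Nat.fib (α + 2 * n) : ℤ) * (Nat.fib (α + i + j) : ℤ) =
      (Nat.fib (α + n + i) : ℤ) * (Nat.fib (α + n + j) : ℤ) -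
        (-1 : ℤ) ^ (α + i + j) * (Nat.fib (n - i) : ℤ) * (Nat.fib (n - j) : ℤ) := by
  have h := vajda (α + i + j) (n - i) (n - j)
  have e1 : α + i + j + (n - i) = α + n + j := by omega
  have e2 : α + i + j + (n - j) = α + n + i := by omega
  have e3 : α + i + j + (n - i) + (n - j) = α + 2 * n := by omega
  rw [e3, e1, e2] at h
  linarith [h]
end

section
/- For α > 0, the polynomials r_n^{(α)}(x) = Σ_{j=0}^n (-1)^j binom(n,j) binom(α+n+j-1, n) x^j are orthogonal with respect to the measure α x^{α-1} dx on (0,1): for m ≠ n, ∫_0^1 r_n^{(α)}(x) r_m^{(α)}(x) α x^{α-1} dx = 0, and ∫_0^1 r_n^{(α)}(x)^2 α x^{α-1} dx = α/(α+2n). -/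
/-!
Integrating termwise, `∫₀¹ rₙ(x) xᵏ α x^(α-1) dx = α Σⱼ (-1)ʲ C(n,j) (α+j)⁽ⁿ⁾ / (n! (α+k+j))`,
where `(y)⁽ⁿ⁾` is the rising factorial. Up to sign this is the `n`-th forward difference at
`α + k` of `t ↦ P(t)/t` with `P(t) = (t-k)⁽ⁿ⁾` of degree `n`. Writing `P(t)/t = Q(t) + P(0)/t`,
the difference kills `Q`, and the `n`-th difference of `1/t` is `(-1)ⁿ n! / (t)⁽ⁿ⁺¹⁾`, so the
moment is `α (-k)⁽ⁿ⁾ / (α+k)⁽ⁿ⁺¹⁾`. It vanishes for `k < n`, which gives orthogonality, and for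
`k = n` it gives the norm.
-/

/-- Generalized binomial coefficient `x(x-1)⋯(x-k+1)/k!` with real upper argument. -/
noncomputable def gbinom (x : ℝ) (k : ℕ) : ℝ :=
  (∏ i ∈ Finset.range k, (x - i)) / (Nat.factorial k : ℝ)

/-- The polynomial `r_n^{(α)}(x) = Σ_{j=0}^n (-1)^j C(n,j) C(α+n+j-1, n) x^j`. -/
noncomputable def rPoly (α : ℝ) (n : ℕ) (x : ℝ) : ℝ :=
  ∑ j ∈ Finset.range (n + 1),
    (-1 : ℝ) ^ j * (Nat.choose n j : ℝ) * gbinom (α + n + j - 1) n * x ^ j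

open Finset Polynomial fwdDiff

theorem alternating_sum_choose_eq_fwdDiff_iter {R : Type*} [CommRing R] (f : R → R) (n : ℕ)
    (y : R) :
    ∑ j ∈ range (n + 1), (-1 : R) ^ j * n.choose j * f (y + j) = (-1) ^ n * (Δ_[1])^[n] f y := by
  rw [fwdDiff_iter_eq_sum_shift, mul_sum]
  refine sum_congr rfl fun j hj => ?_
  obtain ⟨i, rfl⟩ := Nat.exists_eq_add_of_le (Nat.lt_succ_iff.mp (mem_range.mp hj))
  have hsign : (-1 : R) ^ (j + i) * (-1) ^ i = (-1) ^ j := by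
    rw [pow_add, mul_assoc, ← mul_pow, neg_one_mul, neg_neg, one_pow, mul_one]
  rw [Nat.add_sub_cancel_left, zsmul_eq_mul, nsmul_one]
  push_cast
  linear_combination -((j + i).choose j * f (y + j)) * hsign

theorem fwdDiff_iter_inv {𝕜 : Type*} [Field 𝕜] (n : ℕ) {y : 𝕜}
    (hy : (ascPochhammer 𝕜 (n + 1)).eval y ≠ 0) :
    (Δ_[1])^[n] (fun t : 𝕜 => t⁻¹) y =
      (-1) ^ n * n.factorial / (ascPochhammer 𝕜 (n + 1)).eval y := by
  induction n generalizing y with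
  | zero => simp
  | succ n ih =>
    set A := ascPochhammer 𝕜 (n + 1)
    have hleft : (ascPochhammer 𝕜 (n + 2)).eval y = y * A.eval (y + 1) := by
      simp [A, ascPochhammer_succ_left 𝕜 (n + 1), eval_comp]
    have hright : (ascPochhammer 𝕜 (n + 2)).eval y = A.eval y * (y + (n + 1)) := by
      rw [ascPochhammer_succ_eval]
      push_cast
      ring
    have hy1 : A.eval (y + 1) ≠ 0 := right_ne_zero_of_mul (hleft ▸ hy)
    have hy0 : A.eval y ≠ 0 := left_ne_zero_of_mul (hright ▸ hy)
    rw [Function.iterate_succ_apply', fwdDiff, ih hy1, ih hy0, div_sub_div _ _ hy1 hy0,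
      div_eq_div_iff (mul_ne_zero hy1 hy0) hy, hright, Nat.factorial_succ]
    push_cast
    linear_combination (-1) ^ n * n.factorial * A.eval y * (hright.symm.trans hleft)

theorem alternating_sum_choose_eval_eq_zero {R : Type*} [CommRing R] {n : ℕ} {P : R[X]}
    (hP : P.degree < n) (y : R) :
    ∑ j ∈ range (n + 1), (-1 : R) ^ j * n.choose j * P.eval (y + j) = 0 := by
  rcases eq_or_ne P 0 with rfl | hP0
  · simp
  rw [alternating_sum_choose_eq_fwdDiff_iter P.eval,
    fwdDiff_iter_eq_zero_of_degree_lt ((natDegree_lt_iff_degree_lt hP0).mpr hP), Pi.zero_apply,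
    mul_zero]

theorem alternating_sum_choose_inv {𝕜 : Type*} [Field 𝕜] {n : ℕ} {y : 𝕜}
    (hy : (ascPochhammer 𝕜 (n + 1)).eval y ≠ 0) :
    ∑ j ∈ range (n + 1), (-1 : 𝕜) ^ j * n.choose j * (y + j)⁻¹ =
      n.factorial / (ascPochhammer 𝕜 (n + 1)).eval y := by
  rw [alternating_sum_choose_eq_fwdDiff_iter (fun t => t⁻¹), fwdDiff_iter_inv n hy,
    ← mul_div_assoc, ← mul_assoc, ← mul_pow, neg_one_mul, neg_neg, one_pow, one_mul]

theorem alternating_sum_choose_eval_div {𝕜 : Type*} [Field 𝕜] {n : ℕ} {P : 𝕜[X]}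
    (hP : P.degree ≤ n) {y : 𝕜} (hy : (ascPochhammer 𝕜 (n + 1)).eval y ≠ 0) :
    ∑ j ∈ range (n + 1), (-1 : 𝕜) ^ j * n.choose j * (P.eval (y + j) / (y + j)) =
      P.eval 0 * n.factorial / (ascPochhammer 𝕜 (n + 1)).eval y := by
  have hdivX : P.divX.degree < n := by
    rcases eq_or_ne P 0 with rfl | hP0
    · simp
    · exact (degree_divX_lt hP0).trans_le hP
  have hsplit : ∀ j ∈ range (n + 1), (-1 : 𝕜) ^ j * n.choose j * (P.eval (y + j) / (y + j)) =
      (-1) ^ j * n.choose j * P.divX.eval (y + j) +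
        P.eval 0 * ((-1) ^ j * n.choose j * (y + j)⁻¹) := by
    intro j hj
    have hyj : y + j ≠ 0 := fun h => hy <| (ascPochhammer_eval_eq_zero_iff _ _).mpr
      ⟨j, mem_range.mp hj, eq_neg_of_add_eq_zero_right h⟩
    conv_lhs => rw [← divX_mul_X_add P]
    rw [coeff_zero_eq_eval_zero]
    simp only [eval_add, eval_mul, eval_X, eval_C]
    field_simp
  rw [sum_congr rfl hsplit, sum_add_distrib, alternating_sum_choose_eval_eq_zero hdivX,
    ← mul_sum, alternating_sum_choose_inv hy, zero_add, mul_div_assoc]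

theorem gbinom_eq_descPochhammer_div (x : ℝ) (k : ℕ) :
    gbinom x k = (descPochhammer ℝ k).eval x / k.factorial := by
  rw [gbinom, descPochhammer_eval_eq_prod_range]

noncomputable def rCoeff (α : ℝ) (n j : ℕ) : ℝ :=
  (-1 : ℝ) ^ j * n.choose j * gbinom (α + n + j - 1) n

theorem rCoeff_eq_ascPochhammer (α : ℝ) (n j : ℕ) :
    rCoeff α n j =
      (-1 : ℝ) ^ j * n.choose j * ((ascPochhammer ℝ n).eval (α + j) / n.factorial) := by
  rw [rCoeff, gbinom_eq_descPochhammer_div, descPochhammer_eval_eq_ascPochhammer,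
    show α + n + j - 1 - n + 1 = α + j by ring]

-- The value of `∫₀¹ rₙ(x) xᵏ α x^(α-1) dx`.
noncomputable def rMoment (α : ℝ) (n k : ℕ) : ℝ :=
  α * (ascPochhammer ℝ n).eval (-k : ℝ) / (ascPochhammer ℝ (n + 1)).eval (α + k)

theorem rMoment_eq_zero_of_lt (α : ℝ) {n k : ℕ} (hk : k < n) : rMoment α n k = 0 := by
  rw [rMoment, ascPochhammer_eval_neg_coe_nat_of_lt hk, mul_zero, zero_div]

theorem sum_rCoeff_mul_div {α : ℝ} (hα : 0 < α) (n k : ℕ) :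
    ∑ j ∈ range (n + 1), rCoeff α n j * (α / (α + (j + k : ℕ))) = rMoment α n k := by
  set P := (ascPochhammer ℝ n).comp (X - C (k : ℝ))
  have hP : P.degree ≤ n := by
    refine degree_le_of_natDegree_le ?_
    rw [natDegree_comp, ascPochhammer_natDegree, natDegree_X_sub_C, mul_one]
  have hpos := ascPochhammer_pos (n + 1) (α + k) (by positivity)
  have hterm : ∀ j ∈ range (n + 1), rCoeff α n j * (α / (α + (j + k : ℕ))) =
      α / n.factorial * ((-1) ^ j * n.choose j * (P.eval (α + k + j) / (α + k + j))) := by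
    intro j _
    have hne : α + (j : ℝ) + k ≠ 0 := by positivity
    simp only [rCoeff_eq_ascPochhammer, P, eval_comp, eval_sub, eval_X, eval_C]
    push_cast
    field_simp
    rw [show α + k + j - k = α + j by ring]
    ring
  rw [sum_congr rfl hterm, ← mul_sum, alternating_sum_choose_eval_div hP hpos.ne']
  simp only [rMoment, P, eval_comp, eval_sub, eval_X, eval_C, zero_sub]
  field_simp

theorem rCoeff_self_mul_rMoment_self {α : ℝ} (hα : 0 < α) (n : ℕ) :
    rCoeff α n n * rMoment α n n = α / (α + 2 * n) := by
  have hpos := ascPochhammer_pos n (α + n) (by positivity)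
  have h2n : α + 2 * n ≠ 0 := by positivity
  rw [rMoment, rCoeff_eq_ascPochhammer, Nat.choose_self, ascPochhammer_eval_neg_eq_descPochhammer,
    descPochhammer_eval_eq_descFactorial, Nat.descFactorial_self, ascPochhammer_succ_eval]
  field_simp
  rw [← pow_mul, pow_mul', neg_one_sq, one_pow, Nat.cast_one]
  ring

section Weight

open intervalIntegral

theorem intervalIntegrable_pow_mul_weight {α : ℝ} (hα : 0 < α) (p : ℕ) :
    IntervalIntegrable (fun x : ℝ => x ^ p * (α * x ^ (α - 1))) MeasureTheory.volume 0 1 :=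
  ((intervalIntegrable_rpow' (by linarith)).const_mul α).continuousOn_mul
    (continuous_pow p).continuousOn

theorem integral_pow_mul_weight {α : ℝ} (hα : 0 < α) (p : ℕ) :
    ∫ x in (0 : ℝ)..1, x ^ p * (α * x ^ (α - 1)) = α / (α + p) := by
  have hpos : 0 < α + p := by positivity
  have hrpow : ∫ x in (0 : ℝ)..1, x ^ p * (α * x ^ (α - 1)) =
      ∫ x in (0 : ℝ)..1, α * x ^ (α + p - 1) := by
    refine integral_congr_ae (Filter.Eventually.of_forall fun x hx => ?_)
    rw [Set.uIoc_of_le zero_le_one] at hx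
    rw [show α + p - 1 = p + (α - 1) by ring, Real.rpow_add hx.1, Real.rpow_natCast]
    ring
  rw [hrpow, integral_const_mul, integral_rpow (Or.inl (by linarith)), sub_add_cancel,
    Real.one_rpow, Real.zero_rpow hpos.ne', sub_zero, mul_one_div]

theorem integral_sum_pow_mul_weight {α : ℝ} (hα : 0 < α) {ι : Type*} (s : Finset ι)
    (a : ι → ℝ) (e : ι → ℕ) :
    ∫ x in (0 : ℝ)..1, (∑ i ∈ s, a i * x ^ e i) * (α * x ^ (α - 1)) =
      ∑ i ∈ s, a i * (α / (α + e i)) := by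
  simp_rw [sum_mul, mul_assoc]
  rw [integral_finsetSum fun i _ => (intervalIntegrable_pow_mul_weight hα (e i)).const_mul _]
  simp_rw [integral_const_mul, integral_pow_mul_weight hα]

end Weight

theorem integral_rPoly_mul_rPoly {α : ℝ} (hα : 0 < α) (n m : ℕ) :
    ∫ x in (0 : ℝ)..1, rPoly α n x * rPoly α m x * (α * x ^ (α - 1)) =
      ∑ k ∈ range (m + 1), rCoeff α m k * rMoment α n k := by
  have hprod : ∀ x, rPoly α n x * rPoly α m x = ∑ q ∈ range (n + 1) ×ˢ range (m + 1),
      rCoeff α n q.1 * rCoeff α m q.2 * x ^ (q.1 + q.2) := fun x => by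
    rw [rPoly, rPoly, sum_mul_sum, sum_product]
    refine sum_congr rfl fun j _ => sum_congr rfl fun k _ => ?_
    rw [rCoeff, rCoeff, pow_add]
    ring
  simp_rw [hprod, integral_sum_pow_mul_weight hα, sum_product_right]
  refine sum_congr rfl fun k _ => ?_
  rw [← sum_rCoeff_mul_div hα, mul_sum]
  refine sum_congr rfl fun j _ => ?_
  ring

theorem rPoly_orthogonality (α : ℝ) (hα : 0 < α) :
    (∀ n m : ℕ, n ≠ m →
        ∫ x in (0 : ℝ)..1, rPoly α n x * rPoly α m x * (α * x ^ (α - 1)) = 0) ∧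
      ∀ n : ℕ,
        ∫ x in (0 : ℝ)..1, rPoly α n x ^ 2 * (α * x ^ (α - 1)) = α / (α + 2 * n) := by
  have horth : ∀ n m : ℕ, m < n →
      ∫ x in (0 : ℝ)..1, rPoly α n x * rPoly α m x * (α * x ^ (α - 1)) = 0 := fun n m hmn => by
    rw [integral_rPoly_mul_rPoly hα]
    exact sum_eq_zero fun k hk => by
      rw [rMoment_eq_zero_of_lt α ((mem_range.mp hk).trans_le hmn), mul_zero]
  refine ⟨fun n m hnm => ?_, fun n => ?_⟩
  · rcases hnm.lt_or_gt with h | h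
    · simp_rw [mul_comm (rPoly α n _)]
      exact horth m n h
    · exact horth n m h
  · simp_rw [sq]
    rw [integral_rPoly_mul_rPoly hα, sum_range_succ,
      sum_eq_zero fun k hk => by rw [rMoment_eq_zero_of_lt α (mem_range.mp hk), mul_zero],
      zero_add]
    exact rCoeff_self_mul_rMoment_self hα n
end

section
/- For α > 0 and n ≥ 0, det((1/(α+i+j))_{0≤i,j≤n}) = (α · ∏_{k=1}^n (α+2k) · binom(α+2k-1, k)^2)^{-1}; in particular, for α ∈ ℕ, α ≥ 1, this determinant is the reciprocal of a positive integer. -/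
section HilbertAux
open Finset Matrix


lemma hilbert_rec (α : ℝ) (hα : 0 < α) (n : ℕ) :
    (Matrix.of fun i j : Fin (n + 2) => (α + (i : ℕ) + (j : ℕ))⁻¹).det =
      ((∏ i : Fin (n + 2), (α + (i : ℕ) + ((n : ℝ) + 1))⁻¹) *
        (∏ j : Fin (n + 1), ((n : ℝ) + 1 - (j : ℕ))) *
        ((∏ i : Fin (n + 1), ((n : ℝ) + 1 - (i : ℕ))) *
        (∏ j : Fin (n + 1), (α + ((n : ℝ) + 1) + (j : ℕ))⁻¹))) *
      (Matrix.of fun i j : Fin (n + 1) => (α + (i : ℕ) + (j : ℕ))⁻¹).det := by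
  set L : Fin (n + 2) := Fin.last (n + 1) with hL
  have hLv : ((L : ℕ) : ℝ) = (n : ℝ) + 1 := by simp [hL]
  have hne : ∀ (x y : ℕ), α + x + y ≠ 0 := fun x y => by positivity
  have hne' : ∀ (x : ℕ), α + x + ((n : ℝ) + 1) ≠ 0 := fun x => by positivity
  have hne'' : ∀ (x : ℕ), α + ((n : ℝ) + 1) + x ≠ 0 := fun x => by positivity
  set M : Matrix (Fin (n + 2)) (Fin (n + 2)) ℝ :=
    Matrix.of fun i j => (α + (i : ℕ) + (j : ℕ))⁻¹ with hM
  set E : Matrix (Fin (n + 2)) (Fin (n + 2)) ℝ :=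
    Matrix.of fun i j => if j = L then (1 : ℝ) else (α + (i : ℕ) + (j : ℕ))⁻¹ with hE
  set B : Matrix (Fin (n + 2)) (Fin (n + 2)) ℝ :=
    Matrix.of fun i j => if j = L then (1 : ℝ)
      else ((n : ℝ) + 1 - (j : ℕ)) * (α + (i : ℕ) + (j : ℕ))⁻¹ with hB
  set C : Matrix (Fin (n + 2)) (Fin (n + 2)) ℝ :=
    Matrix.of fun i j => if j = L then (α + (i : ℕ) + ((n : ℝ) + 1))⁻¹
      else (α + (i : ℕ) + (j : ℕ))⁻¹ - (α + (i : ℕ) + ((n : ℝ) + 1))⁻¹ with hC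
  set F : Matrix (Fin (n + 2)) (Fin (n + 2)) ℝ :=
    Matrix.of fun i j => if i = L then E L j else if j = L then (0 : ℝ)
      else ((n : ℝ) + 1 - (i : ℕ)) * ((α + (i : ℕ) + (j : ℕ))⁻¹ * (α + ((n : ℝ) + 1) + (j : ℕ))⁻¹)
      with hF
  -- Step 1: column operations
  have step1 : M.det = C.det := by
    have h := Matrix.det_eq_of_forall_row_eq_smul_add_const
      (A := Cᵀ) (B := Mᵀ) (fun j => if j = L then (0 : ℝ) else -1) L (by simp) ?_
    · rw [← Matrix.det_transpose M, ← h, Matrix.det_transpose]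
    · intro j i
      by_cases hj : j = L
      · simp [hC, hM, Matrix.transpose_apply, hj, hLv]
      · simp only [hC, hM, Matrix.transpose_apply, Matrix.of_apply, if_neg hj, hLv]
        ring
  -- Step 2: factor rows
  have step2 : C.det = (∏ i : Fin (n + 2), (α + (i : ℕ) + ((n : ℝ) + 1))⁻¹) * B.det := by
    have h : C = Matrix.of fun i j : Fin (n + 2) =>
        (α + (i : ℕ) + ((n : ℝ) + 1))⁻¹ * B i j := by
      ext i j
      by_cases hj : j = L
      · simp [hC, hB, hj]
      · simp only [hC, hB, Matrix.of_apply, if_neg hj]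
        rw [inv_sub_inv (hne (i : ℕ) (j : ℕ)) (hne' (i : ℕ)), div_eq_mul_inv, mul_inv]
        ring
    rw [h, Matrix.det_mul_column]
  -- Step 3: factor columns
  have step3 : B.det =
      (∏ j : Fin (n + 2), (if j = L then (1 : ℝ) else (n : ℝ) + 1 - (j : ℕ))) * E.det := by
    have h : B = Matrix.of fun i j : Fin (n + 2) =>
        (if j = L then (1 : ℝ) else (n : ℝ) + 1 - (j : ℕ)) * E i j := by
      ext i j
      by_cases hj : j = L <;> simp [hB, hE, hj]
    rw [h, Matrix.det_mul_row]
  -- Step 4: row operations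
  have step4 : E.det = F.det := by
    have h := Matrix.det_eq_of_forall_row_eq_smul_add_const
      (A := F) (B := E) (fun i => if i = L then (0 : ℝ) else -1) L (by simp) ?_
    · exact h.symm
    · intro i j
      by_cases hi : i = L
      · simp [hF, hi]
      · by_cases hj : j = L
        · simp [hF, hE, hi, hj]
        · simp only [hF, hE, Matrix.of_apply, if_neg hi, if_neg hj, hLv]
          rw [neg_one_mul, ← sub_eq_add_neg,
            inv_sub_inv (hne (i : ℕ) (j : ℕ)) (hne'' (j : ℕ)), div_eq_mul_inv, mul_inv]
          ring
  -- Step 5: expansion along last column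
  have step5 : F.det = ((F.submatrix Fin.castSucc Fin.castSucc).det) := by
    rw [Matrix.det_succ_column F L]
    rw [Finset.sum_eq_single L]
    · have hFLL : F L L = 1 := by simp [hF, hE]
      rw [hFLL]
      have : (L.succAbove) = Fin.castSucc := by
        simp [hL, Fin.succAbove_last]
      rw [this]
      have hsign : (-1 : ℝ) ^ ((L : ℕ) + (L : ℕ)) = 1 :=
        Even.neg_one_pow ⟨(L : ℕ), rfl⟩
      simp [hsign]
    · intro i _ hiL
      have : F i L = 0 := by simp [hF, if_neg hiL]
      simp [this]
    · intro h
      exact absurd (Finset.mem_univ L) h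
  -- Step 6: factor the minor
  have step6 : (F.submatrix Fin.castSucc Fin.castSucc).det =
      (∏ i : Fin (n + 1), ((n : ℝ) + 1 - (i : ℕ))) *
        ((∏ j : Fin (n + 1), (α + ((n : ℝ) + 1) + (j : ℕ))⁻¹) *
          (Matrix.of fun i j : Fin (n + 1) => (α + (i : ℕ) + (j : ℕ))⁻¹).det) := by
    have hcs : ∀ i : Fin (n + 1), Fin.castSucc i ≠ L := fun i =>
      (Fin.castSucc_lt_last i).ne
    have h : F.submatrix Fin.castSucc Fin.castSucc =
        Matrix.of fun i j : Fin (n + 1) => ((n : ℝ) + 1 - (i : ℕ)) *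
          (Matrix.of (fun i j : Fin (n + 1) =>
            (α + ((n : ℝ) + 1) + (j : ℕ))⁻¹ *
              (Matrix.of fun i j : Fin (n + 1) => (α + (i : ℕ) + (j : ℕ))⁻¹) i j) i j) := by
      ext i j
      simp only [Matrix.submatrix_apply, hF, Matrix.of_apply, if_neg (hcs i), if_neg (hcs j),
        Fin.coe_castSucc]
      ring
    rw [h, Matrix.det_mul_column, Matrix.det_mul_row]
  have hprod : (∏ j : Fin (n + 2), (if j = L then (1 : ℝ) else (n : ℝ) + 1 - (j : ℕ))) =
      ∏ j : Fin (n + 1), ((n : ℝ) + 1 - (j : ℕ)) := by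
    rw [Fin.prod_univ_castSucc, if_pos rfl, mul_one]
    exact Finset.prod_congr rfl fun j _ => by
      rw [if_neg (Fin.castSucc_lt_last j).ne, Fin.coe_castSucc]
  rw [step1, step2, step3, step4, step5, step6, hprod]
  ring

lemma prod_sub_eq_factorial (n : ℕ) :
    (∏ j : Fin (n + 1), ((n : ℝ) + 1 - (j : ℕ))) = ((n + 1).factorial : ℝ) := by
  rw [Fin.prod_univ_eq_prod_range (fun j : ℕ => ((n : ℝ) + 1 - (j : ℕ)))]
  rw [← Finset.prod_range_reflect]
  have h : ∀ j ∈ Finset.range (n + 1),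
      ((n : ℝ) + 1 - ((n + 1 - 1 - j : ℕ) : ℝ)) = ((j : ℝ) + 1) := by
    intro j hj
    have hj' : j ≤ n := Nat.lt_succ_iff.mp (Finset.mem_range.mp hj)
    have h2 : (n + 1 - 1 - j : ℕ) = n - j := by omega
    rw [h2, Nat.cast_sub hj']
    ring
  rw [Finset.prod_congr rfl h, ← Finset.prod_range_add_one_eq_factorial]
  push_cast
  rfl

lemma hilbert_formula (α : ℝ) (hα : 0 < α) (n : ℕ) :
    (Matrix.of fun i j : Fin (n + 1) => (α + (i : ℕ) + (j : ℕ))⁻¹).det =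
      (α * ∏ k ∈ Finset.Icc 1 n, ((α + 2 * k) * gbinom (α + 2 * k - 1) k ^ 2))⁻¹ := by
  induction n with
  | zero =>
    rw [Matrix.det_fin_one]
    norm_num
  | succ n ih =>
    rw [hilbert_rec α hα n, ih]
    set Q : ℝ := ∏ i ∈ Finset.range (n + 1), (α + ((n : ℝ) + 1) + (i : ℕ)) with hQdef
    have hQpos : 0 < Q := Finset.prod_pos fun i _ => by positivity
    set Fc : ℝ := ((n + 1).factorial : ℝ) with hFc
    have hFpos : (0 : ℝ) < Fc := by
      rw [hFc]; exact_mod_cast (n + 1).factorial_pos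
    have hcast : (((n + 1 : ℕ) : ℝ)) = (n : ℝ) + 1 := by push_cast; ring
    have hA : (∏ i : Fin (n + 2), (α + (i : ℕ) + ((n : ℝ) + 1))⁻¹) =
        ((α + 2 * ((n : ℝ) + 1)) * Q)⁻¹ := by
      rw [Finset.prod_inv_distrib]
      congr 1
      rw [Fin.prod_univ_castSucc]
      simp only [Fin.coe_castSucc, Fin.val_last]
      rw [Fin.prod_univ_eq_prod_range (fun i : ℕ => (α + (i : ℕ) + ((n : ℝ) + 1))) (n + 1)]
      have h1 : (∏ i ∈ Finset.range (n + 1), (α + (i : ℕ) + ((n : ℝ) + 1))) = Q := by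
        rw [hQdef]
        exact Finset.prod_congr rfl fun i _ => by ring
      rw [h1]
      push_cast
      ring
    have hZ : (∏ j : Fin (n + 1), (α + ((n : ℝ) + 1) + (j : ℕ))⁻¹) = Q⁻¹ := by
      rw [Finset.prod_inv_distrib]
      congr 1
      rw [hQdef]
      exact Fin.prod_univ_eq_prod_range (fun j : ℕ => (α + ((n : ℝ) + 1) + (j : ℕ))) (n + 1)
    have hgb : gbinom (α + 2 * (((n + 1 : ℕ) : ℝ)) - 1) (n + 1) = Q / Fc := by
      rw [gbinom, hFc, hQdef]
      congr 1
      rw [← Finset.prod_range_reflect]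
      refine Finset.prod_congr rfl fun i hi => ?_
      have hi' : i ≤ n := Nat.lt_succ_iff.mp (Finset.mem_range.mp hi)
      have h2 : (n + 1 - 1 - i : ℕ) = n - i := by omega
      rw [h2, Nat.cast_sub hi']
      push_cast
      ring
    have hIcc : (∏ k ∈ Finset.Icc 1 (n + 1), ((α + 2 * k) * gbinom (α + 2 * k - 1) k ^ 2)) =
        (∏ k ∈ Finset.Icc 1 n, ((α + 2 * k) * gbinom (α + 2 * k - 1) k ^ 2)) *
          ((α + 2 * ((n + 1 : ℕ) : ℝ)) * gbinom (α + 2 * ((n + 1 : ℕ) : ℝ) - 1) (n + 1) ^ 2) :=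
      Finset.prod_Icc_succ_top (Nat.succ_le_succ (Nat.zero_le n)) _
    rw [hA, prod_sub_eq_factorial, hZ, hIcc, hgb, hcast]
    set X : ℝ := (α + 2 * ((n : ℝ) + 1)) * (Q / Fc) ^ 2 with hX
    have key : ((α + 2 * ((n : ℝ) + 1)) * Q)⁻¹ * Fc * (Fc * Q⁻¹) = X⁻¹ := by
      have h1 : α + 2 * ((n : ℝ) + 1) ≠ 0 := by positivity
      have h2 : Q ≠ 0 := hQpos.ne'
      have h3 : Fc ≠ 0 := hFpos.ne'
      rw [hX]
      field_simp
    clear_value X Q Fc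
    rw [← hFc, key]
    generalize (∏ k ∈ Finset.Icc 1 n, ((α + 2 * (k : ℝ)) * gbinom (α + 2 * (k : ℝ) - 1) k ^ 2)) = P
    rw [mul_inv, mul_inv, mul_inv]
    ring

lemma gbinom_nat (N k : ℕ) (h : k ≤ N) : gbinom (N : ℝ) k = (N.choose k : ℝ) := by
  rw [gbinom]
  have h1 : (∏ i ∈ Finset.range k, ((N : ℝ) - (i : ℕ))) = ((N.descFactorial k : ℕ) : ℝ) := by
    rw [Nat.descFactorial_eq_prod_range, Nat.cast_prod]
    refine Finset.prod_congr rfl fun i hi => ?_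
    have hi' : i ≤ N := le_trans (Nat.lt_succ_iff.mp (Nat.lt_succ_of_lt (Finset.mem_range.mp hi))) h
    rw [Nat.cast_sub hi']
  rw [h1, Nat.descFactorial_eq_factorial_mul_choose]
  push_cast
  rw [mul_comm, mul_div_assoc]
  have : (k.factorial : ℝ) ≠ 0 := by exact_mod_cast k.factorial_ne_zero
  rw [div_self this, mul_one]

end HilbertAux

theorem hilbert_det (α : ℝ) (hα : 0 < α) (n : ℕ) :
    (Matrix.of fun i j : Fin (n + 1) => (α + (i : ℕ) + (j : ℕ))⁻¹).det =
        (α * ∏ k ∈ Finset.Icc 1 n, ((α + 2 * k) * gbinom (α + 2 * k - 1) k ^ 2))⁻¹ ∧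
      ∀ a : ℕ, 1 ≤ a → α = a →
        ∃ m : ℕ, 0 < m ∧
          (Matrix.of fun i j : Fin (n + 1) => (α + (i : ℕ) + (j : ℕ))⁻¹).det = ((m : ℝ))⁻¹ := by
  refine ⟨hilbert_formula α hα n, ?_⟩
  intro a ha hαa
  refine ⟨a * ∏ k ∈ Finset.Icc 1 n, ((a + 2 * k) * (Nat.choose (a + 2 * k - 1) k) ^ 2), ?_, ?_⟩
  · refine Nat.mul_pos (by omega) (Finset.prod_pos fun k hk => ?_)
    have hkle : k ≤ a + 2 * k - 1 := by omega
    exact Nat.mul_pos (by omega) (pow_pos (Nat.choose_pos hkle) 2)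
  · rw [hilbert_formula α hα n, hαa]
    congr 1
    rw [Nat.cast_mul, Nat.cast_prod]
    congr 1
    refine Finset.prod_congr rfl fun k hk => ?_
    have hk1 : 1 ≤ k := (Finset.mem_Icc.mp hk).1
    have hkle : k ≤ a + 2 * k - 1 := by omega
    have hcast : ((a : ℝ) + 2 * (k : ℕ) - 1) = ((a + 2 * k - 1 : ℕ) : ℝ) := by
      rw [Nat.cast_sub (by omega : 1 ≤ a + 2 * k)]
      push_cast
      ring
    rw [hcast, gbinom_nat _ _ hkle]
    push_cast
    ring
end

section
/- For α > 0 and n ≥ 0, the (i,j)-entry of the inverse of the (n+1)×(n+1) matrix (1/(α+i+j))_{0≤i,j≤n} equals (-1)^{i+j} (α+i+j) binom(α+n+i, n-j) binom(α+n+j, n-i) binom(α+i+j-1, i) binom(α+i+j-1, j). In particular, for α ∈ ℕ with α ≥ 1 all entries of the inverse are integers. -/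
open Finset Polynomial
set_option maxHeartbeats 1000000

lemma prod_neg' {ι : Type*} (s : Finset ι) (f : ι → ℝ) :
    ∏ m ∈ s, (-(f m)) = (-1) ^ s.card * ∏ m ∈ s, f m := by
  rw [← Finset.prod_const, ← Finset.prod_mul_distrib]
  exact Finset.prod_congr rfl fun m _ => by ring

lemma cauchy_right_inv {N : ℕ} (x y : Fin N → ℝ) (hx : Function.Injective x)
    (hy : Function.Injective y) (hxy : ∀ i j, x i + y j ≠ 0) :
    (Matrix.of fun i j => (x i + y j)⁻¹) *
      (Matrix.of fun j l : Fin N =>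
        (∏ m, (x m + y j)) * (∏ m, (x l + y m)) /
          ((x l + y j) * (∏ m ∈ Finset.univ.erase j, (y j - y m)) *
            (∏ m ∈ Finset.univ.erase l, (x l - x m)))) = 1 := by
  ext i l
  rw [Matrix.mul_apply]
  have hN : 0 < N := i.pos
  set f : ℝ[X] := ∏ m ∈ Finset.univ.erase l, (X - C (x m)) with hf
  have hfdeg : f.natDegree = N - 1 := by
    rw [hf, Polynomial.natDegree_prod _ _ (fun m _ => Polynomial.X_sub_C_ne_zero (x m))]
    simp [Polynomial.natDegree_X_sub_C, Finset.card_erase_of_mem]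
  have hfne : f ≠ 0 := Finset.prod_ne_zero_iff.mpr (fun m _ => Polynomial.X_sub_C_ne_zero (x m))
  have hdeg : f.degree < ((Finset.univ : Finset (Fin N)).card : ℕ) := by
    rw [Polynomial.degree_eq_natDegree hfne, hfdeg, Finset.card_univ, Fintype.card_fin]
    exact_mod_cast Nat.sub_lt hN one_pos
  have hvs : Set.InjOn (fun j : Fin N => -(y j)) ↑(Finset.univ : Finset (Fin N)) := by
    intro a _ b _ h
    exact hy (by simpa using neg_injective h)
  have key := Lagrange.eq_interpolate (f := f) (v := fun j : Fin N => -(y j)) hvs hdeg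
  have E : f.eval (x i) = ∑ j : Fin N, f.eval (-(y j)) *
      ∏ m ∈ Finset.univ.erase j, ((y m - y j)⁻¹ * (x i + y m)) := by
    conv_lhs => rw [key]
    rw [Lagrange.interpolate_apply, Polynomial.eval_finset_sum]
    refine Finset.sum_congr rfl fun j _ => ?_
    simp only [Polynomial.eval_mul, Polynomial.eval_C, Lagrange.basis,
      Polynomial.eval_prod, Lagrange.basisDivisor, Polynomial.eval_sub, Polynomial.eval_X]
    congr 1
    exact Finset.prod_congr rfl fun m hm => by ring
  have hQ : (∏ m ∈ Finset.univ.erase l, (x l - x m)) ≠ 0 :=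
    Finset.prod_ne_zero_iff.mpr fun m hm =>
      sub_ne_zero.mpr fun h => (Finset.mem_erase.mp hm).1 (hx h.symm)
  have hPi : (∏ m, (x i + y m)) ≠ 0 := Finset.prod_ne_zero_iff.mpr fun m _ => hxy i m
  have hPl : (∏ m, (x l + y m)) ≠ 0 := Finset.prod_ne_zero_iff.mpr fun m _ => hxy l m
  have hss : ((-1 : ℝ)) ^ (N - 1) * ((-1 : ℝ)) ^ (N - 1) = 1 := by
    rw [← pow_add]
    exact Even.neg_one_pow ⟨N - 1, rfl⟩
  have hsum : (∑ j, (Matrix.of fun i j => (x i + y j)⁻¹) i j *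
      (Matrix.of fun j l : Fin N =>
        (∏ m, (x m + y j)) * (∏ m, (x l + y m)) /
          ((x l + y j) * (∏ m ∈ Finset.univ.erase j, (y j - y m)) *
            (∏ m ∈ Finset.univ.erase l, (x l - x m)))) j l) =
      f.eval (x i) * (∏ m, (x l + y m)) /
        ((∏ m ∈ Finset.univ.erase l, (x l - x m)) * ∏ m, (x i + y m)) := by
    rw [E, Finset.sum_mul, Finset.sum_div]
    refine Finset.sum_congr rfl fun j _ => ?_
    have hPj : (∏ m ∈ Finset.univ.erase j, (y j - y m)) ≠ 0 :=
      Finset.prod_ne_zero_iff.mpr fun m hm =>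
        sub_ne_zero.mpr fun h => (Finset.mem_erase.mp hm).1 (hy h.symm)
    have hA2 : (∏ m ∈ Finset.univ.erase j, (x i + y m)) ≠ 0 :=
      Finset.prod_ne_zero_iff.mpr fun m _ => hxy i m
    have hxl : (∏ m, (x m + y j)) = (x l + y j) * ∏ m ∈ Finset.univ.erase l, (x m + y j) :=
      (Finset.mul_prod_erase _ _ (Finset.mem_univ l)).symm
    have hyi : (∏ m, (x i + y m)) = (x i + y j) * ∏ m ∈ Finset.univ.erase j, (x i + y m) :=
      (Finset.mul_prod_erase _ _ (Finset.mem_univ j)).symm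
    have hcl : (Finset.univ.erase l).card = N - 1 := by
      simp [Finset.card_erase_of_mem]
    have hcj : (Finset.univ.erase j).card = N - 1 := by
      simp [Finset.card_erase_of_mem]
    have e1 : f.eval (-(y j)) =
        (-1 : ℝ) ^ (N - 1) * ∏ m ∈ Finset.univ.erase l, (x m + y j) := by
      rw [hf, Polynomial.eval_prod, ← hcl, ← prod_neg']
      refine Finset.prod_congr rfl fun m _ => ?_
      simp; ring
    have e2 : (∏ m ∈ Finset.univ.erase j, (y m - y j)) =
        (-1 : ℝ) ^ (N - 1) * ∏ m ∈ Finset.univ.erase j, (y j - y m) := by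
      rw [← hcj, ← prod_neg']
      exact Finset.prod_congr rfl fun m _ => by ring
    have h1 := hxy i j
    have h2 := hxy l j
    simp only [Matrix.of_apply]
    rw [Finset.prod_mul_distrib, Finset.prod_inv_distrib, hxl, hyi, e1, e2]
    rcases Nat.even_or_odd (N - 1) with hpar | hpar
    · rw [hpar.neg_one_pow]
      field_simp
    · rw [hpar.neg_one_pow]
      field_simp
  rw [hsum]
  rcases eq_or_ne i l with rfl | hil
  · have : f.eval (x i) = ∏ m ∈ Finset.univ.erase i, (x i - x m) := by
      rw [hf, Polynomial.eval_prod]; simp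
    rw [this, Matrix.one_apply_eq]
    field_simp
  · have : f.eval (x i) = 0 := by
      rw [hf, Polynomial.eval_prod]
      refine Finset.prod_eq_zero (Finset.mem_erase.mpr ⟨hil, Finset.mem_univ i⟩) ?_
      simp
    rw [this, Matrix.one_apply_ne hil]
    simp


lemma prod_neg'' {ι : Type*} (s : Finset ι) (f : ι → ℝ) :
    ∏ m ∈ s, (-(f m)) = (-1) ^ s.card * ∏ m ∈ s, f m := by
  rw [← Finset.prod_const, ← Finset.prod_mul_distrib]
  exact Finset.prod_congr rfl fun m _ => by ring

lemma gbinom_natCast (m k : ℕ) : gbinom (m : ℝ) k = (m.choose k : ℝ) := by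
  rcases le_or_gt k m with h | h
  · have hprod : (∏ i ∈ Finset.range k, ((m : ℝ) - i)) = ((m.descFactorial k : ℕ) : ℝ) := by
      rw [Nat.descFactorial_eq_prod_range, Nat.cast_prod]
      refine Finset.prod_congr rfl fun t ht => ?_
      have ht' := Finset.mem_range.mp ht
      rw [Nat.cast_sub (by omega)]
  -- fallthrough
    rw [gbinom, hprod, Nat.descFactorial_eq_factorial_mul_choose, Nat.cast_mul,
      mul_comm, mul_div_assoc, div_self (by exact_mod_cast k.factorial_ne_zero), mul_one]
  · rw [gbinom, Finset.prod_eq_zero (Finset.mem_range.mpr h) (by simp), zero_div,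
      Nat.choose_eq_zero_of_lt h, Nat.cast_zero]

lemma prodA (β : ℝ) (n k : ℕ) (hk : k ≤ n) :
    ∏ t ∈ Finset.range (n + 1), (β + t) =
      (gbinom (β + k - 1) k * k.factorial) * (β + k) *
        (gbinom (β + n) (n - k) * (n - k).factorial) := by
  have gb1 : gbinom (β + k - 1) k * k.factorial = ∏ t ∈ Finset.range k, (β + t) := by
    rw [gbinom, div_mul_cancel₀ _ (by exact_mod_cast k.factorial_ne_zero)]
    have h := Finset.prod_range_reflect (fun t : ℕ => β + t) k
    rw [← h]
    refine Finset.prod_congr rfl fun t ht => ?_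
    have ht' := Finset.mem_range.mp ht
    rw [Nat.cast_sub (by omega), Nat.cast_sub (by omega)]
    push_cast
    ring
  have gb2 : gbinom (β + n) (n - k) * (n - k).factorial =
      ∏ t ∈ Finset.range (n - k), (β + (k + 1 + t : ℕ)) := by
    rw [gbinom, div_mul_cancel₀ _ (by exact_mod_cast (n - k).factorial_ne_zero)]
    have h := Finset.prod_range_reflect (fun t : ℕ => β + (k + 1 + t : ℕ)) (n - k)
    rw [← h]
    refine Finset.prod_congr rfl fun t ht => ?_
    have ht' := Finset.mem_range.mp ht
    have he : k + 1 + (n - k - 1 - t) = n - t := by omega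
    rw [he, Nat.cast_sub (by omega)]
    ring
  have hsplit : n + 1 = (k + 1) + (n - k) := by omega
  rw [hsplit, Finset.prod_range_add, Finset.prod_range_succ, gb1, gb2]

lemma prodY (n : ℕ) (i : Fin (n + 1)) :
    ∏ m ∈ Finset.univ.erase i, (((i : ℕ) : ℝ) - ((m : ℕ) : ℝ)) =
      (-1) ^ (n - (i : ℕ)) * ((i : ℕ).factorial * (n - (i : ℕ)).factorial) := by
  have hi : (i : ℕ) ≤ n := Fin.is_le i
  set F : ℕ → ℝ := fun t => if t = (i : ℕ) then 1 else ((i : ℕ) : ℝ) - t with hF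
  have h1 : ∏ m ∈ Finset.univ.erase i, (((i : ℕ) : ℝ) - ((m : ℕ) : ℝ)) =
      ∏ t ∈ Finset.range (n + 1), F t := by
    rw [← Fin.prod_univ_eq_prod_range F (n + 1)]
    rw [← Finset.mul_prod_erase _ (fun m : Fin (n + 1) => F (m : ℕ)) (Finset.mem_univ i)]
    simp only [hF, if_pos rfl, one_mul]
    refine Finset.prod_congr rfl fun m hm => ?_
    rw [if_neg (fun h => (Finset.mem_erase.mp hm).1 (Fin.ext h))]
  have hsplit : n + 1 = ((i : ℕ) + 1) + (n - (i : ℕ)) := by omega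
  rw [h1, show Finset.range (n + 1) = Finset.range (((i : ℕ) + 1) + (n - (i : ℕ))) from by
    rw [← hsplit], Finset.prod_range_add, Finset.prod_range_succ]
  have e1 : ∏ t ∈ Finset.range (i : ℕ), F t = ((i : ℕ).factorial : ℝ) := by
    rw [← Nat.descFactorial_self (i : ℕ), Nat.descFactorial_eq_prod_range, Nat.cast_prod]
    refine Finset.prod_congr rfl fun t ht => ?_
    have ht' := Finset.mem_range.mp ht
    simp only [hF, if_neg (by omega : ¬ t = (i : ℕ))]
    rw [Nat.cast_sub (by omega)]
  have e2 : F (i : ℕ) = 1 := by simp [hF]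
  have e3 : ∏ t ∈ Finset.range (n - (i : ℕ)), F ((i : ℕ) + 1 + t) =
      (-1) ^ (n - (i : ℕ)) * ((n - (i : ℕ)).factorial : ℝ) := by
    have hFt : ∀ t : ℕ, F ((i : ℕ) + 1 + t) = -(((t : ℕ) : ℝ) + 1) := by
      intro t
      simp only [hF, if_neg (by omega : ¬ (i : ℕ) + 1 + t = (i : ℕ))]
      push_cast
      ring
    calc ∏ t ∈ Finset.range (n - (i : ℕ)), F ((i : ℕ) + 1 + t)
        = ∏ t ∈ Finset.range (n - (i : ℕ)), (-(((t : ℕ) : ℝ) + 1)) :=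
          Finset.prod_congr rfl fun t _ => hFt t
      _ = (-1) ^ (Finset.range (n - (i : ℕ))).card *
            ∏ t ∈ Finset.range (n - (i : ℕ)), (((t : ℕ) : ℝ) + 1) := prod_neg'' _ _
      _ = (-1) ^ (n - (i : ℕ)) * ((n - (i : ℕ)).factorial : ℝ) := by
          rw [Finset.card_range]
          congr 1
          rw [← Finset.prod_range_add_one_eq_factorial (n - (i : ℕ)), Nat.cast_prod]
          push_cast
          rfl
  rw [e1, e2, e3]
  ring

lemma div_sign_helper (a c u v : ℝ) (p q : ℕ) :
    a / (c * ((-1) ^ p * u) * ((-1) ^ q * v)) =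
      a * (-1) ^ p * (-1) ^ q / (c * u * v) := by
  rcases Nat.even_or_odd p with hp | hp <;> rcases Nat.even_or_odd q with hq | hq <;>
    simp only [hp.neg_one_pow, hq.neg_one_pow] <;> ring

theorem hilbert_inverse_entries (α : ℝ) (hα : 0 < α) (n : ℕ) (i j : Fin (n + 1)) :
    (Matrix.of fun i j : Fin (n + 1) => (α + (i : ℕ) + (j : ℕ))⁻¹)⁻¹ i j =
        (-1 : ℝ) ^ ((i : ℕ) + (j : ℕ)) * (α + (i : ℕ) + (j : ℕ)) *
          gbinom (α + n + (i : ℕ)) (n - (j : ℕ)) * gbinom (α + n + (j : ℕ)) (n - (i : ℕ)) *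
          gbinom (α + (i : ℕ) + (j : ℕ) - 1) (i : ℕ) *
          gbinom (α + (i : ℕ) + (j : ℕ) - 1) (j : ℕ) ∧
      ∀ a : ℕ, 1 ≤ a → α = a →
        ∃ z : ℤ,
          (Matrix.of fun i j : Fin (n + 1) => (α + (i : ℕ) + (j : ℕ))⁻¹)⁻¹ i j = (z : ℝ) := by
  have hi : (i : ℕ) ≤ n := Fin.is_le i
  have hj : (j : ℕ) ≤ n := Fin.is_le j
  set x : Fin (n + 1) → ℝ := fun m => α + ((m : ℕ) : ℝ) with hxdef
  set y : Fin (n + 1) → ℝ := fun m => ((m : ℕ) : ℝ) with hydef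
  have hx : Function.Injective x := by
    intro a b h
    simp only [hxdef, add_right_inj, Nat.cast_inj] at h
    exact Fin.ext h
  have hy : Function.Injective y := by
    intro a b h
    simp only [hydef, Nat.cast_inj] at h
    exact Fin.ext h
  have hxy : ∀ a b : Fin (n + 1), x a + y b ≠ 0 := by
    intro a b
    simp only [hxdef, hydef]
    positivity
  have hinv : (Matrix.of fun i j : Fin (n + 1) => (α + (i : ℕ) + (j : ℕ))⁻¹)⁻¹ =
      Matrix.of fun p q : Fin (n + 1) =>
        (∏ m, (x m + y p)) * (∏ m, (x q + y m)) /
          ((x q + y p) * (∏ m ∈ Finset.univ.erase p, (y p - y m)) *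
            (∏ m ∈ Finset.univ.erase q, (x q - x m))) := by
    apply Matrix.inv_eq_right_inv
    exact cauchy_right_inv x y hx hy hxy
  have hp1 : (∏ m, (x m + y i)) = ∏ t ∈ Finset.range (n + 1), ((α + (i : ℕ)) + t) := by
    rw [← Fin.prod_univ_eq_prod_range (fun t : ℕ => (α + (i : ℕ)) + t) (n + 1)]
    exact Finset.prod_congr rfl fun m _ => by simp only [hxdef, hydef]; ring
  have hp2 : (∏ m, (x j + y m)) = ∏ t ∈ Finset.range (n + 1), ((α + (j : ℕ)) + t) := by
    rw [← Fin.prod_univ_eq_prod_range (fun t : ℕ => (α + (j : ℕ)) + t) (n + 1)]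
  have hy1 : (∏ m ∈ Finset.univ.erase i, (y i - y m)) =
      (-1) ^ (n - (i : ℕ)) * (((i : ℕ)).factorial * (n - (i : ℕ)).factorial) := by
    rw [← prodY n i]
  have hx1 : (∏ m ∈ Finset.univ.erase j, (x j - x m)) =
      (-1) ^ (n - (j : ℕ)) * (((j : ℕ)).factorial * (n - (j : ℕ)).factorial) := by
    rw [← prodY n j]
    exact Finset.prod_congr rfl fun m _ => by simp only [hxdef]; ring
  have hc : α + ((i : ℕ) : ℝ) + ((j : ℕ) : ℝ) ≠ 0 := by positivity
  have hsign2 : ((-1 : ℝ)) ^ ((i : ℕ) + (j : ℕ)) =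
      (-1) ^ (n - (i : ℕ)) * (-1) ^ (n - (j : ℕ)) := by
    have hev : Even ((n - (i : ℕ)) + (n - (j : ℕ)) + ((i : ℕ) + (j : ℕ))) := ⟨n, by omega⟩
    have h1 : ((-1 : ℝ)) ^ ((n - (i : ℕ)) + (n - (j : ℕ))) * (-1) ^ ((i : ℕ) + (j : ℕ)) = 1 := by
      rw [← pow_add]; exact hev.neg_one_pow
    have h2 : ((-1 : ℝ)) ^ ((n - (i : ℕ)) + (n - (j : ℕ))) *
        ((-1 : ℝ)) ^ ((n - (i : ℕ)) + (n - (j : ℕ))) = 1 := by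
      rw [← pow_add]
      have hev2 : Even (((n - (i : ℕ)) + (n - (j : ℕ))) + ((n - (i : ℕ)) + (n - (j : ℕ)))) :=
        ⟨(n - (i : ℕ)) + (n - (j : ℕ)), rfl⟩
      exact hev2.neg_one_pow
    calc ((-1 : ℝ)) ^ ((i : ℕ) + (j : ℕ))
        = ((-1 : ℝ) ^ ((n - (i : ℕ)) + (n - (j : ℕ))) *
            (-1) ^ ((n - (i : ℕ)) + (n - (j : ℕ)))) * (-1) ^ ((i : ℕ) + (j : ℕ)) := by
          rw [h2, one_mul]
      _ = (-1) ^ ((n - (i : ℕ)) + (n - (j : ℕ))) *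
            ((-1) ^ ((n - (i : ℕ)) + (n - (j : ℕ))) * (-1) ^ ((i : ℕ) + (j : ℕ))) := by ring
      _ = (-1) ^ ((n - (i : ℕ)) + (n - (j : ℕ))) := by rw [h1, mul_one]
      _ = (-1) ^ (n - (i : ℕ)) * (-1) ^ (n - (j : ℕ)) := pow_add _ _ _
  have main : (Matrix.of fun i j : Fin (n + 1) => (α + (i : ℕ) + (j : ℕ))⁻¹)⁻¹ i j =
      (-1 : ℝ) ^ ((i : ℕ) + (j : ℕ)) * (α + (i : ℕ) + (j : ℕ)) *
        gbinom (α + n + (i : ℕ)) (n - (j : ℕ)) * gbinom (α + n + (j : ℕ)) (n - (i : ℕ)) *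
        gbinom (α + (i : ℕ) + (j : ℕ) - 1) (i : ℕ) *
        gbinom (α + (i : ℕ) + (j : ℕ) - 1) (j : ℕ) := by
    rw [hinv]
    simp only [Matrix.of_apply]
    rw [hp1, hp2, hy1, hx1, prodA (α + (i : ℕ)) n (j : ℕ) hj, prodA (α + (j : ℕ)) n (i : ℕ) hi,
      div_sign_helper]
    rw [show x j + y i = α + ((j : ℕ) : ℝ) + ((i : ℕ) : ℝ) from by simp only [hxdef, hydef],
      show α + n + ((i : ℕ) : ℝ) = α + ((i : ℕ) : ℝ) + n from by ring,
      show α + n + ((j : ℕ) : ℝ) = α + ((j : ℕ) : ℝ) + n from by ring,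
      show α + ((j : ℕ) : ℝ) + ((i : ℕ) : ℝ) - 1 = α + ((i : ℕ) : ℝ) + ((j : ℕ) : ℝ) - 1
        from by ring,
      hsign2]
    have hc2 : α + ((j : ℕ) : ℝ) + ((i : ℕ) : ℝ) ≠ 0 := by positivity
    have hf1 : (((i : ℕ)).factorial : ℝ) ≠ 0 := by exact_mod_cast (i : ℕ).factorial_ne_zero
    have hf2 : (((j : ℕ)).factorial : ℝ) ≠ 0 := by exact_mod_cast (j : ℕ).factorial_ne_zero
    have hf3 : ((n - (i : ℕ)).factorial : ℝ) ≠ 0 := by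
      exact_mod_cast (n - (i : ℕ)).factorial_ne_zero
    have hf4 : ((n - (j : ℕ)).factorial : ℝ) ≠ 0 := by
      exact_mod_cast (n - (j : ℕ)).factorial_ne_zero
    field_simp
  refine ⟨main, fun a ha hαa => ?_⟩
  refine ⟨(-1) ^ ((i : ℕ) + (j : ℕ)) * (a + (i : ℕ) + (j : ℕ)) *
    ((a + n + (i : ℕ)).choose (n - (j : ℕ))) * ((a + n + (j : ℕ)).choose (n - (i : ℕ))) *
    ((a + (i : ℕ) + (j : ℕ) - 1).choose (i : ℕ)) *
    ((a + (i : ℕ) + (j : ℕ) - 1).choose (j : ℕ)), ?_⟩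
  rw [main, hαa]
  rw [show ((a : ℝ)) + n + ((i : ℕ) : ℝ) = ((a + n + (i : ℕ) : ℕ) : ℝ) from by push_cast; ring,
    show ((a : ℝ)) + n + ((j : ℕ) : ℝ) = ((a + n + (j : ℕ) : ℕ) : ℝ) from by push_cast; ring,
    show ((a : ℝ)) + ((i : ℕ) : ℝ) + ((j : ℕ) : ℝ) - 1 =
      ((a + (i : ℕ) + (j : ℕ) - 1 : ℕ) : ℝ) from by
        rw [Nat.cast_sub (by omega)]; push_cast; ring,
    gbinom_natCast, gbinom_natCast, gbinom_natCast, gbinom_natCast]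
  push_cast
  ring
end
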